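/- arXiv:2101.07474 — 4 statements merged into one kernel-verified Lean document; each statement's English description precedes it below -/
import Mathlib

section
/- Fix M > 0, vectors b, k ∈ ℝⁿ, and a real n × n matrix A such that both A and A + b kᵀ are invertible. Then the set of equilibrium points {x ∈ ℝⁿ : A x + sat_M(⟨k, x⟩)·b = 0} is contained in the three-point set {0, −M·A⁻¹ b, M·A⁻¹ b}; in particular the closed loop system ẋ = A x + b·sat_M(k x) has at most three equilibrium points. -/
/-!
The saturation takes only the values `s`, `M` and `-M`. Where `sat M ⟪k, x⟫ = ⟪k, x⟫` the
equilibrium equation reads `(A + b kᵀ) x = 0`, so `x = 0`; where it is the constant `c = ±M`, it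
reads `A x = -c • b`, so `x = -c • A⁻¹ b`.
-/

open RealInnerProductSpace

/-- The saturation function `sat_M (s) = sign(s) · min (M, |s|)`. -/
noncomputable def sat (M s : ℝ) : ℝ := Real.sign s * min M |s|

lemma sat_eq_self_or_eq_or_eq_neg (M s : ℝ) : sat M s = s ∨ sat M s = M ∨ sat M s = -M := by
  rcases lt_trichotomy s 0 with hs | rfl | hs
  · rcases le_total (-s) M with h | h
    · left; simp [sat, Real.sign_of_neg hs, abs_of_neg hs, min_eq_right h]
    · right; right; simp [sat, Real.sign_of_neg hs, abs_of_neg hs, min_eq_left h]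
  · left; simp [sat]
  · rcases le_total s M with h | h
    · left; simp [sat, Real.sign_of_pos hs, abs_of_pos hs, min_eq_right h]
    · right; left; simp [sat, Real.sign_of_pos hs, abs_of_pos hs, min_eq_left h]

section

variable {ι : Type*} [Fintype ι] [DecidableEq ι]

lemma Matrix.toEuclideanLin_vecMulVec_apply (b k x : EuclideanSpace ℝ ι) :
    Matrix.toEuclideanLin (Matrix.vecMulVec b k) x = ⟪k, x⟫ • b := by
  ext i
  simp [Matrix.toLpLin_apply, Matrix.vecMulVec_mulVec, PiLp.inner_apply, dotProduct,
    mul_comm]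

lemma Matrix.toEuclideanLin_inv_apply_of_apply_eq {𝕜 : Type*} [RCLike 𝕜] {A : Matrix ι ι 𝕜}
    (hA : IsUnit A) {x y : EuclideanSpace 𝕜 ι} (h : Matrix.toEuclideanLin A x = y) :
    Matrix.toEuclideanLin A⁻¹ y = x := by
  have := hA.invertible
  subst h
  simp [Matrix.toLpLin_apply, Matrix.mulVec_mulVec]

end

theorem equilibria_subset_three_points_general {n : ℕ} (M : ℝ)
    (A : Matrix (Fin n) (Fin n) ℝ) (b k : EuclideanSpace ℝ (Fin n))
    (hA : IsUnit A) (hABK : IsUnit (A + Matrix.vecMulVec b k)) :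
    {x : EuclideanSpace ℝ (Fin n) | Matrix.toEuclideanLin A x + sat M ⟪k, x⟫ • b = 0} ⊆
      {0, -(M • Matrix.toEuclideanLin A⁻¹ b), M • Matrix.toEuclideanLin A⁻¹ b} := by
  intro x (hx : Matrix.toEuclideanLin A x + sat M ⟪k, x⟫ • b = 0)
  have saturated (c : ℝ) (hc : sat M ⟪k, x⟫ = c) : x = -(c • Matrix.toEuclideanLin A⁻¹ b) := by
    rw [hc, ← eq_neg_iff_add_eq_zero] at hx
    rw [← Matrix.toEuclideanLin_inv_apply_of_apply_eq hA hx, map_neg, map_smul]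
  rcases sat_eq_self_or_eq_or_eq_neg M ⟪k, x⟫ with hlin | hsat | hsat
  · left
    rw [hlin, ← Matrix.toEuclideanLin_vecMulVec_apply, ← LinearMap.add_apply, ← map_add] at hx
    rw [← Matrix.toEuclideanLin_inv_apply_of_apply_eq hABK hx, map_zero]
  · exact Or.inr (Or.inl (saturated M hsat))
  · exact Or.inr (Or.inr (by simpa using saturated (-M) hsat))

/-- If both `A` and `A + b kᵀ` are invertible, the set of equilibrium points of
`ẋ = A x + b · sat_M(⟨k, x⟩)` is contained in `{0, -M • A⁻¹ b, M • A⁻¹ b}`;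
in particular there are at most three equilibrium points. -/
theorem equilibria_subset_three_points {n : ℕ} (M : ℝ) (hM : 0 < M)
    (A : Matrix (Fin n) (Fin n) ℝ) (b k : EuclideanSpace ℝ (Fin n))
    (hA : IsUnit A) (hABK : IsUnit (A + Matrix.vecMulVec b k)) :
    {x : EuclideanSpace ℝ (Fin n) | Matrix.toEuclideanLin A x + sat M ⟪k, x⟫ • b = 0} ⊆
      {0, -(M • Matrix.toEuclideanLin A⁻¹ b), M • Matrix.toEuclideanLin A⁻¹ b} :=
  equilibria_subset_three_points_general M A b k hA hABK
end

section
/- Let A be a real n × n matrix all of whose complex eigenvalues have positive real part (anti-stable), and let b, k ∈ ℝⁿ be such that all complex eigenvalues of A + b kᵀ have negative real part (Hurwitz). Then A is invertible and (−1)ⁿ · (1 + ⟨k, A⁻¹ b⟩) > 0; in particular, if n is even then ⟨k, A⁻¹ b⟩ > −1, and if n is odd then ⟨k, A⁻¹ b⟩ < −1. -/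
/-! A monic real polynomial with no root in `[0, ∞)` is positive at `0`, and the value of the
characteristic polynomial at `0` is `(-1)ⁿ det`. Since `A + b kᵀ` has no eigenvalue in `[0, ∞)`,
this gives `(-1)ⁿ det (A + b kᵀ) > 0`; since `-A` has none either, it gives `det A > 0`. The
matrix determinant lemma `det (A + b kᵀ) = det A · (1 + ⟨k, A⁻¹ b⟩)` then fixes the sign of
`1 + ⟨k, A⁻¹ b⟩`. -/

open Filter Polynomial

namespace Polynomial

theorem Monic.eventually_eval_pos {𝕜 : Type*} [NormedField 𝕜] [LinearOrder 𝕜]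
    [IsStrictOrderedRing 𝕜] [OrderTopology 𝕜] {p : 𝕜[X]} (hp : p.Monic) :
    ∀ᶠ x in atTop, 0 < p.eval x :=
  p.isEquivalent_atTop_lead.eventually_pos <|
    (eventually_gt_atTop 0).mono fun x hx => by simpa [hp.leadingCoeff] using pow_pos hx _

theorem Monic.eval_pos_of_forall_ge_not_isRoot {p : ℝ[X]} (hp : p.Monic) {a : ℝ}
    (h : ∀ x, a ≤ x → ¬p.IsRoot x) : 0 < p.eval a := by
  obtain ⟨b, hab, hb⟩ := ((eventually_ge_atTop a).and hp.eventually_eval_pos).exists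
  by_contra! ha
  obtain ⟨c, hc, hc0⟩ := intermediate_value_Icc hab p.continuous.continuousOn ⟨ha, hb.le⟩
  exact h c hc.1 hc0

end Polynomial

namespace Matrix

variable {n : Type*} [Fintype n] [DecidableEq n]

theorem algebraMap_mem_roots_charpoly_map {R : Type*} (S : Type*) [CommRing R] [CommRing S]
    [IsDomain S] [Algebra R S] {M : Matrix n n R} {x : R} (hx : M.charpoly.IsRoot x) :
    algebraMap R S x ∈ (M.map (algebraMap R S)).charpoly.roots := by
  rw [charpoly_map, mem_roots (M.charpoly_monic.map _).ne_zero, IsRoot, eval_map_algebraMap,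
    aeval_algebraMap_apply, coe_aeval_eq_eval, hx.eq_zero, map_zero]

theorem isRoot_charpoly_neg {R : Type*} [CommRing R] {M : Matrix n n R} {x : R} :
    (-M).charpoly.IsRoot x ↔ M.charpoly.IsRoot (-x) := by
  rw [IsRoot, IsRoot, eval_charpoly, eval_charpoly,
    show scalar n x - -M = -(scalar n (-x) - M) by rw [map_neg]; abel, det_neg,
    (isUnit_neg_one.pow _).mul_right_eq_zero]

theorem neg_one_pow_card_mul_det_pos_of_forall_nonneg_not_isRoot {M : Matrix n n ℝ}
    (h : ∀ x : ℝ, 0 ≤ x → ¬M.charpoly.IsRoot x) : 0 < (-1) ^ Fintype.card n * M.det := by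
  rw [det_eq_sign_charpoly_coeff, ← mul_assoc, ← pow_add, Even.neg_one_pow ⟨_, rfl⟩, one_mul,
    coeff_zero_eq_eval_zero]
  exact M.charpoly_monic.eval_pos_of_forall_ge_not_isRoot h

theorem det_pos_of_forall_isRoot_charpoly_pos {M : Matrix n n ℝ}
    (h : ∀ x : ℝ, M.charpoly.IsRoot x → 0 < x) : 0 < M.det := by
  have h_neg : ∀ x : ℝ, 0 ≤ x → ¬(-M).charpoly.IsRoot x := fun x hx hroot =>
    (h _ (isRoot_charpoly_neg.mp hroot)).not_ge (neg_nonpos.mpr hx)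
  simpa [det_neg, ← mul_assoc, ← pow_add, Even.neg_one_pow ⟨_, rfl⟩] using
    neg_one_pow_card_mul_det_pos_of_forall_nonneg_not_isRoot h_neg

theorem det_add_vecMulVec {R : Type*} [CommRing R] {A : Matrix n n R} (hA : IsUnit A.det)
    (u v : n → R) : (A + vecMulVec u v).det = A.det * (1 + v ⬝ᵥ A⁻¹ *ᵥ u) := by
  rw [vecMulVec_eq Unit, det_add_replicateCol_mul_replicateRow hA, Matrix.mul_assoc,
    ← replicateCol_mulVec, det_one_add_mul_comm, det_one_add_replicateCol_mul_replicateRow]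

end Matrix

open RealInnerProductSpace

open Matrix in
/-- If `A` is anti-stable and `A + b kᵀ` is Hurwitz, then `A` is invertible and
`(-1)ⁿ (1 + ⟨k, A⁻¹ b⟩) > 0`; in particular `⟨k, A⁻¹ b⟩ > -1` for even `n` and
`⟨k, A⁻¹ b⟩ < -1` for odd `n`. -/
theorem parity_dichotomy {n : ℕ}
    (A : Matrix (Fin n) (Fin n) ℝ) (b k : EuclideanSpace ℝ (Fin n))
    (hA : ∀ μ ∈ (Matrix.charpoly (A.map (algebraMap ℝ ℂ))).roots, 0 < μ.re)
    (hABK : ∀ μ ∈ (Matrix.charpoly ((A + Matrix.vecMulVec b k).map (algebraMap ℝ ℂ))).roots,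
      μ.re < 0) :
    IsUnit A ∧
    0 < (-1 : ℝ) ^ n * (1 + ⟪k, Matrix.toEuclideanLin A⁻¹ b⟫) ∧
    (Even n → -1 < ⟪k, Matrix.toEuclideanLin A⁻¹ b⟫) ∧
    (Odd n → ⟪k, Matrix.toEuclideanLin A⁻¹ b⟫ < -1) := by
  have hA_real (x : ℝ) (hx : A.charpoly.IsRoot x) : 0 < x := by
    simpa using hA _ (algebraMap_mem_roots_charpoly_map ℂ hx)
  have hABK_real (x : ℝ) (hx : 0 ≤ x) : ¬(A + vecMulVec b k).charpoly.IsRoot x := fun hroot =>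
    hx.not_gt (by simpa using hABK _ (algebraMap_mem_roots_charpoly_map ℂ hroot))
  have hdetA : 0 < A.det := det_pos_of_forall_isRoot_charpoly_pos hA_real
  have hdetABK := neg_one_pow_card_mul_det_pos_of_forall_nonneg_not_isRoot hABK_real
  rw [det_add_vecMulVec (isUnit_iff_ne_zero.mpr hdetA.ne'), Fintype.card_fin,
    mul_left_comm] at hdetABK
  have hsign : 0 < (-1 : ℝ) ^ n * (1 + ⟪k, toEuclideanLin A⁻¹ b⟫) := by
    rw [EuclideanSpace.inner_eq_star_dotProduct, star_trivial, dotProduct_comm]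
    exact pos_of_mul_pos_right hdetABK hdetA.le
  refine ⟨(isUnit_iff_isUnit_det A).mpr (isUnit_iff_ne_zero.mpr hdetA.ne'), hsign,
    fun he => ?_, fun ho => ?_⟩
  · rw [he.neg_one_pow, one_mul] at hsign
    linarith
  · rw [ho.neg_one_pow, neg_one_mul] at hsign
    linarith
end

section
/- (Theorem 3.2, even case.) Let n be even, M > 0, let A be a real n × n matrix all of whose complex eigenvalues have positive real part (anti-stable), and let b, k ∈ ℝⁿ be such that all complex eigenvalues of A + b kᵀ have negative real part (stabilizing feedback). Then the closed loop system ẋ = A x + b·sat_M(⟨k, x⟩) has a unique equilibrium point, namely x = 0: the only x ∈ ℝⁿ with A x + sat_M(⟨k, x⟩)·b = 0 is x = 0. -/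
/-!
An anti-stable real matrix has positive determinant, and a Hurwitz one has determinant of sign
`(-1)ⁿ`: the real roots of the monic characteristic polynomial lie on one side of `0`, which fixes
the sign of its value at `0`. For even `n` both `det A` and `det (A + b kᵀ)` are therefore positive.

At an equilibrium put `s = ⟨k, x⟩` and `a = sat_M s`, so that `A x = -a b`. The matrix determinant
lemma gives `a · det (A + b kᵀ) = det A · (a - s)`, while saturation lies in the sector `[0, 1]`,
i.e. `a (s - a) ≥ 0`. Hence `a² · det (A + b kᵀ) ≤ 0`, so `a = 0`, then `A x = 0` and `x = 0`.
-/

open RealInnerProductSpace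
open Matrix Polynomial

theorem sat_zero (M : ℝ) : sat M 0 = 0 := by simp [sat]

theorem sat_mul_sub_sat_nonneg {M : ℝ} (hM : 0 ≤ M) (s : ℝ) : 0 ≤ sat M s * (s - sat M s) := by
  rcases lt_trichotomy s 0 with hs | rfl | hs
  · rw [sat, Real.sign_of_neg hs, abs_of_neg hs]
    have : min M (-s) ≤ -s := min_le_right _ _
    nlinarith [le_min hM (neg_nonneg.mpr hs.le)]
  · simp [sat_zero]
  · rw [sat, Real.sign_of_pos hs, abs_of_pos hs]
    have : min M s ≤ s := min_le_right _ _
    nlinarith [le_min hM hs.le]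

namespace Matrix

variable {ι : Type*} [Fintype ι] [DecidableEq ι]

def IsHurwitz (A : Matrix ι ι ℝ) : Prop :=
  ∀ μ ∈ (A.map (algebraMap ℝ ℂ)).charpoly.roots, μ.re < 0

def IsAntiStable (A : Matrix ι ι ℝ) : Prop :=
  ∀ μ ∈ (A.map (algebraMap ℝ ℂ)).charpoly.roots, 0 < μ.re

theorem map_mem_roots_charpoly_map {R K : Type*} [CommRing R] [CommRing K] [IsDomain K]
    (f : R →+* K) {A : Matrix ι ι R} {r : R} (hr : A.charpoly.IsRoot r) :
    f r ∈ (A.map f).charpoly.roots := by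
  rw [charpoly_map, mem_roots ((charpoly_monic A).map f).ne_zero]
  exact hr.map

theorem charpoly_eval_zero {R : Type*} [CommRing R] (A : Matrix ι ι R) :
    A.charpoly.eval 0 = (-1) ^ Fintype.card ι * A.det := by
  rw [det_eq_sign_charpoly_coeff, ← mul_assoc, ← mul_pow, neg_one_mul, neg_neg, one_pow, one_mul,
    coeff_zero_eq_eval_zero]

theorem IsHurwitz.neg_one_pow_mul_det_pos {A : Matrix ι ι ℝ} (hA : A.IsHurwitz) :
    0 < (-1) ^ Fintype.card ι * A.det := by
  rw [← charpoly_eval_zero]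
  refine zero_lt_eval_of_roots_lt_of_leadingCoeff_nonneg (fun y hy => ?_) ?_
  · simpa using hA _ (map_mem_roots_charpoly_map (algebraMap ℝ ℂ) hy)
  · simp [(charpoly_monic A).leadingCoeff]

theorem IsAntiStable.det_pos {A : Matrix ι ι ℝ} (hA : A.IsAntiStable) : 0 < A.det := by
  have := zero_lt_negOnePow_mul_eval_of_lt_roots_of_leadingCoeff_nonneg (x := 0)
    (fun y hy => by simpa using hA _ (map_mem_roots_charpoly_map (algebraMap ℝ ℂ) hy))
    (by simp [(charpoly_monic A).leadingCoeff])
  rwa [charpoly_natDegree_eq_dim, Int.cast_negOnePow_natCast, charpoly_eval_zero, ← mul_assoc,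
    ← mul_pow, neg_one_mul, neg_neg, one_pow, one_mul] at this

/-- The matrix determinant lemma, with `A⁻¹ b` replaced by `c⁻¹ x`. -/
theorem mul_det_add_vecMulVec {K : Type*} [Field K] {A : Matrix ι ι K} {b k x : ι → K}
    {c : K} (h : A *ᵥ x = c • b) :
    c * (A + vecMulVec b k).det = A.det * (c + k ⬝ᵥ x) := by
  rcases eq_or_ne c 0 with rfl | hc
  · rcases eq_or_ne x 0 with rfl | hx
    · simp
    · rw [zero_smul] at h
      simp [exists_mulVec_eq_zero_iff.mp ⟨x, hx, h⟩]
  · have hb : b = A *ᵥ (c⁻¹ • x) := by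
      rw [mulVec_smul, h, smul_smul, inv_mul_cancel₀ hc, one_smul]
    have hfactor : A + vecMulVec b k = A * (1 + vecMulVec (c⁻¹ • x) k) := by
      rw [hb, ← mul_vecMulVec, mul_add, mul_one]
    rw [hfactor, det_mul, vecMulVec_eq Unit, det_one_add_replicateCol_mul_replicateRow,
      dotProduct_smul, smul_eq_mul]
    field_simp

theorem eq_zero_of_mulVec_add_sat_smul_eq_zero {A : Matrix ι ι ℝ} {b k x : ι → ℝ} {M : ℝ}
    (hM : 0 ≤ M) (hA : 0 < A.det) (hB : 0 < (A + vecMulVec b k).det)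
    (h : A *ᵥ x + sat M (k ⬝ᵥ x) • b = 0) : x = 0 := by
  set s := k ⬝ᵥ x
  set a := sat M s
  have hAx : A *ᵥ x = (-a) • b := by rw [neg_smul, eq_neg_iff_add_eq_zero, h]
  have hdet := mul_det_add_vecMulVec (k := k) hAx
  have ha : a = 0 := by
    have hsq : a ^ 2 * (A + vecMulVec b k).det ≤ 0 :=
      calc a ^ 2 * (A + vecMulVec b k).det = -(A.det * (a * (s - a))) := by
            linear_combination (-a) * hdet
        _ ≤ 0 := neg_nonpos.mpr (mul_nonneg hA.le (sat_mul_sub_sat_nonneg hM s))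
    exact pow_eq_zero_iff two_ne_zero |>.mp
      (le_antisymm (nonpos_of_mul_nonpos_left hsq hB) (sq_nonneg a))
  rw [ha, zero_smul, add_zero] at h
  by_contra hx
  exact hA.ne' (exists_mulVec_eq_zero_iff.mp ⟨x, hx, h⟩)

end Matrix

/-- Theorem 3.2, even case: if `n` is even, `A` is anti-stable and the feedback
`A + b kᵀ` is Hurwitz, then the closed loop system `ẋ = A x + b · sat_M(⟨k, x⟩)`
has the origin as its unique equilibrium point. -/
theorem unique_equilibrium_even {n : ℕ} (hn : Even n) (M : ℝ) (hM : 0 < M)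
    (A : Matrix (Fin n) (Fin n) ℝ) (b k : EuclideanSpace ℝ (Fin n))
    (hA : ∀ μ ∈ (Matrix.charpoly (A.map (algebraMap ℝ ℂ))).roots, 0 < μ.re)
    (hABK : ∀ μ ∈ (Matrix.charpoly ((A + Matrix.vecMulVec b k).map (algebraMap ℝ ℂ))).roots,
      μ.re < 0) :
    ∀ x : EuclideanSpace ℝ (Fin n),
      Matrix.toEuclideanLin A x + sat M ⟪k, x⟫ • b = 0 ↔ x = 0 := by
  have hdetA : 0 < A.det := IsAntiStable.det_pos hA
  have hdetB : 0 < (A + vecMulVec b k).det := by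
    simpa only [Fintype.card_fin, hn.neg_one_pow, one_mul]
      using IsHurwitz.neg_one_pow_mul_det_pos hABK
  intro x
  constructor
  · intro h
    have h' := congrArg WithLp.ofLp h
    simp only [EuclideanSpace.inner_eq_star_dotProduct, star_trivial, dotProduct_comm,
      WithLp.ofLp_add, ofLp_toLpLin, toLin'_apply, WithLp.ofLp_smul, WithLp.ofLp_zero] at h'
    exact (WithLp.ofLp_eq_zero 2).mp (eq_zero_of_mulVec_add_sat_smul_eq_zero hM.le hdetA hdetB h')
  · rintro rfl
    simp [sat_zero]
end

section
/- Let A be the real 3 × 3 matrix with rows (1, −3, 0), (3, 1, 0), (0, 0, 4), let b = (1, 2, 4)ᵀ and k = (7/3, −4/3, −35/12). Then the characteristic polynomial of A + b kᵀ equals (X + 1)(X + 2)(X + 3); equivalently, the eigenvalues of A + b kᵀ are −1, −2 and −3, so A + b kᵀ is Hurwitz. -/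
open Polynomial

theorem Polynomial.roots_X_add_C_mul_X_add_C_mul_X_add_C {R : Type*} [CommRing R] [IsDomain R]
    (a b c : R) : ((X + C a) * (X + C b) * (X + C c)).roots = {-a, -b, -c} := by
  rw [roots_mul (mul_ne_zero (mul_ne_zero (X_add_C_ne_zero a) (X_add_C_ne_zero b))
      (X_add_C_ne_zero c)), roots_mul (mul_ne_zero (X_add_C_ne_zero a) (X_add_C_ne_zero b)),
    roots_X_add_C, roots_X_add_C, roots_X_add_C]
  rfl

theorem closedLoop_eq :
    (!![1, -3, 0; 3, 1, 0; 0, 0, 4] : Matrix (Fin 3) (Fin 3) ℝ)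
        + Matrix.vecMulVec ![1, 2, 4] ![7/3, -4/3, -35/12]
      = !![10/3, -13/3, -35/12; 23/3, -5/3, -35/6; 28/3, -16/3, -23/3] := by
  ext i j
  fin_cases i <;> fin_cases j <;> norm_num

theorem closedLoop_charpoly :
    Matrix.charpoly
        ((!![1, -3, 0; 3, 1, 0; 0, 0, 4] : Matrix (Fin 3) (Fin 3) ℝ)
          + Matrix.vecMulVec ![1, 2, 4] ![7/3, -4/3, -35/12])
      = (X + C 1) * (X + C 2) * (X + C 3) := by
  rw [closedLoop_eq, Matrix.charpoly, Matrix.det_fin_three]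
  refine Polynomial.funext fun x => ?_
  simp
  ring

/-- Verification for the paper's 3-dimensional counterexample: with
`A = !![1, -3, 0; 3, 1, 0; 0, 0, 4]`, `b = (1, 2, 4)ᵀ` and
`k = (7/3, -4/3, -35/12)`, the characteristic polynomial of `A + b kᵀ` is
`(X + 1)(X + 2)(X + 3)`, so the eigenvalues are `-1, -2, -3` and `A + b kᵀ`
is Hurwitz. -/
theorem counterexample_closed_loop_hurwitz :
    Matrix.charpoly
        ((!![1, -3, 0; 3, 1, 0; 0, 0, 4] : Matrix (Fin 3) (Fin 3) ℝ)
          + Matrix.vecMulVec ![1, 2, 4] ![7/3, -4/3, -35/12])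
      = (X + C 1) * (X + C 2) * (X + C 3) ∧
    (Matrix.charpoly
        (((!![1, -3, 0; 3, 1, 0; 0, 0, 4] : Matrix (Fin 3) (Fin 3) ℝ)
          + Matrix.vecMulVec ![1, 2, 4] ![7/3, -4/3, -35/12]).map
            (algebraMap ℝ ℂ))).roots = {-1, -2, -3} ∧
    ∀ μ ∈ (Matrix.charpoly
        (((!![1, -3, 0; 3, 1, 0; 0, 0, 4] : Matrix (Fin 3) (Fin 3) ℝ)
          + Matrix.vecMulVec ![1, 2, 4] ![7/3, -4/3, -35/12]).map
            (algebraMap ℝ ℂ))).roots, μ.re < 0 := by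
  rw [Matrix.charpoly_map, closedLoop_charpoly]
  have hroots : (((X + C 1) * (X + C 2) * (X + C 3) : ℝ[X]).map (algebraMap ℝ ℂ)).roots
      = {-1, -2, -3} := by
    simpa using roots_X_add_C_mul_X_add_C_mul_X_add_C (1 : ℂ) 2 3
  exact ⟨rfl, hroots, by rw [hroots]; norm_num⟩
end
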